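/- arXiv:2509.06909 — 5 statements merged into one kernel-verified Lean document; each statement's English description precedes it below -/
import Mathlib

section
/- Let (a_n) be an injective sequence of integers. Then for Lebesgue almost every x ∈ ℝ, the sequence (a_n x) is uniformly distributed modulo 1. -/
open Filter MeasureTheory Set
open scoped Topology

noncomputable def weylAvg (u : ℕ → ℝ) (N : ℕ) : ℂ :=
  (N : ℂ)⁻¹ * ∑ n ∈ Finset.Icc 1 N, Complex.exp (2 * Real.pi * Complex.I * (u n : ℂ))

/-- Weyl criterion: `(u n)` is uniformly distributed mod 1. -/
def UDmod1 (u : ℕ → ℝ) : Prop :=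
  ∀ k : ℤ, k ≠ 0 → Tendsto (fun N => weylAvg (fun n => (k : ℝ) * u n) N) atTop (nhds 0)

noncomputable def scatterSum (a : ℕ → ℝ) (δ : ℝ) (N : ℕ) : ℝ :=
  ((N : ℝ) ^ 2)⁻¹ * ∑ n ∈ Finset.Icc 1 N, ∑ m ∈ Finset.Ico 1 n,
    (if a n = a m then 1 else min (|a n - a m| ^ (-δ)) 1)

def IsDeltaScattered (a : ℕ → ℝ) (δ : ℝ) : Prop :=
  ∃ ε > 0, ∀ᶠ N : ℕ in atTop, scatterSum a δ N ≤ ((Real.log N) ^ ((1 : ℝ) + ε))⁻¹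

def IsScattered (a : ℕ → ℝ) : Prop := ∀ δ : ℝ, 0 < δ → δ ≤ 1 → IsDeltaScattered a δ

/-! The exponentials `x ↦ e(m x)`, `m ∈ ℤ`, are orthonormal on `[0, 1]`, so for injective `b`
the mean square of `W_N(x) = (1/N) ∑_{n ≤ N} e(b_n x)` over `[0, 1]` is exactly `1/N`. Along the
squares `N = M²` these mean squares are summable, hence `W_{M²}(x) → 0` for almost every `x`
(a Borel–Cantelli argument). Between consecutive squares `W_N` moves by `O(1/M)`, since
`N - M² ≤ 2M` terms of modulus one are added, so `W_N(x) → 0` along all `N`. Finally `W_N` is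
`1`-periodic in `x`, so the exceptional set is null on all of `ℝ`. Applied to `b_n = k a_n` for
each of the countably many `k ≠ 0`, this is Weyl's criterion. -/

open Real
open Complex (I)
open scoped Complex

theorem integral_exp_two_pi_I_int_mul (m : ℤ) :
    ∫ x in (0 : ℝ)..1, cexp (2 * π * I * m * x) = if m = 0 then 1 else 0 := by
  split_ifs with hm
  · simp [hm]
  have hc : 2 * π * I * m ≠ 0 := by simp [pi_ne_zero, hm]
  have hper : cexp (2 * π * I * m) = 1 := by
    simpa [mul_comm] using Complex.exp_int_mul_two_pi_mul_I m
  simp [integral_exp_mul_complex hc, hper]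

theorem integral_norm_sq_sum_exp {ι : Type*} (s : Finset ι) {b : ι → ℤ} (hb : Set.InjOn b s) :
    ∫ x in (0 : ℝ)..1, ‖∑ n ∈ s, cexp (2 * π * I * b n * x)‖ ^ 2 = s.card := by
  classical
  have hexpand : ∀ x : ℝ, ((‖∑ n ∈ s, cexp (2 * π * I * b n * x)‖ ^ 2 : ℝ) : ℂ) =
      ∑ n ∈ s, ∑ m ∈ s, cexp (2 * π * I * ((b n - b m : ℤ) : ℂ) * x) := by
    intro x
    rw [Complex.ofReal_pow, ← Complex.mul_conj', map_sum, Finset.sum_mul_sum]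
    refine Finset.sum_congr rfl fun n _ => Finset.sum_congr rfl fun m _ => ?_
    rw [← Complex.exp_conj, ← Complex.exp_add]
    simp only [map_mul, Complex.conj_I, Complex.conj_ofReal, map_intCast, map_ofNat]
    push_cast
    ring_nf
  have hdiag : ∀ n ∈ s, ∀ m ∈ s, (if b n - b m = 0 then (1 : ℂ) else 0) = if n = m then 1 else 0 :=
    fun n hn m hm => by simp only [sub_eq_zero, hb.eq_iff hn hm]
  have hint : ∀ n m : ι, IntervalIntegrable
      (fun x : ℝ => cexp (2 * π * I * ((b n - b m : ℤ) : ℂ) * x)) volume 0 1 :=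
    fun n m => (by fun_prop : Continuous _).intervalIntegrable _ _
  apply Complex.ofReal_injective
  rw [← intervalIntegral.integral_ofReal]
  simp_rw [hexpand]
  rw [intervalIntegral.integral_finsetSum fun n _ =>
    (continuous_finsetSum s fun m _ => by fun_prop).intervalIntegrable _ _]
  simp_rw [intervalIntegral.integral_finsetSum fun m _ => hint _ m, integral_exp_two_pi_I_int_mul]
  rw [Finset.sum_congr rfl fun n hn => Finset.sum_congr rfl (hdiag n hn)]
  simp

theorem natCast_mul_weylAvg (u : ℕ → ℝ) (N : ℕ) :
    (N : ℂ) * weylAvg u N = ∑ n ∈ Finset.Icc 1 N, cexp (2 * π * I * u n) := by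
  rcases N.eq_zero_or_pos with rfl | hN
  · simp
  · rw [weylAvg, ← mul_assoc, mul_inv_cancel₀ (by exact_mod_cast hN.ne'), one_mul]

theorem weylAvg_int_mul (b : ℕ → ℤ) (N : ℕ) (x : ℝ) :
    weylAvg (fun n => (b n : ℝ) * x) N =
      (N : ℂ)⁻¹ * ∑ n ∈ Finset.Icc 1 N, cexp (2 * π * I * b n * x) := by
  simp only [weylAvg, Complex.ofReal_mul, Complex.ofReal_intCast, mul_assoc]

theorem continuous_weylAvg_int_mul (b : ℕ → ℤ) (N : ℕ) :
    Continuous fun x : ℝ => weylAvg (fun n => (b n : ℝ) * x) N := by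
  unfold weylAvg
  fun_prop

theorem weylAvg_int_mul_periodic (b : ℕ → ℤ) (N : ℕ) :
    Function.Periodic (fun x : ℝ => weylAvg (fun n => (b n : ℝ) * x) N) 1 := by
  intro x
  simp only [weylAvg_int_mul]
  congr 1
  refine Finset.sum_congr rfl fun n _ => ?_
  rw [Complex.ofReal_add, Complex.ofReal_one, mul_add, mul_one, Complex.exp_add,
    show 2 * π * I * b n = (b n : ℂ) * (2 * π * I) by ring, Complex.exp_int_mul_two_pi_mul_I,
    mul_one]

theorem integral_norm_sq_weylAvg_int_mul {b : ℕ → ℤ} {N : ℕ} (hb : Set.InjOn b (Finset.Icc 1 N)) :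
    ∫ x in (0 : ℝ)..1, ‖weylAvg (fun n => (b n : ℝ) * x) N‖ ^ 2 = (N : ℝ)⁻¹ := by
  simp only [weylAvg_int_mul, norm_mul, norm_inv, Complex.norm_natCast, mul_pow,
    intervalIntegral.integral_const_mul, integral_norm_sq_sum_exp _ hb, Nat.card_Icc,
    Nat.add_sub_cancel]
  rcases N.eq_zero_or_pos with rfl | hN
  · simp
  · field_simp

theorem norm_weylAvg_le_of_le (u : ℕ → ℝ) {M N : ℕ} (hMN : M ≤ N) :
    ‖weylAvg u N‖ ≤ ‖weylAvg u M‖ + (N - M) / N := by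
  rcases N.eq_zero_or_pos with rfl | hN
  · simp [weylAvg, Nat.le_zero.mp hMN]
  have hNR : (0 : ℝ) < N := by exact_mod_cast hN
  have htail : ‖(N : ℂ) * weylAvg u N - M * weylAvg u M‖ ≤ N - M := by
    have hsub : Finset.Icc 1 M ⊆ Finset.Icc 1 N := Finset.Icc_subset_Icc_right hMN
    rw [natCast_mul_weylAvg, natCast_mul_weylAvg, ← Finset.sum_sdiff_eq_sub hsub]
    refine (norm_sum_le _ _).trans ?_
    have hone : ∀ n, ‖cexp (2 * π * I * u n)‖ = 1 := fun n => by
      rw [show 2 * π * I * u n = ((2 * π * u n : ℝ) : ℂ) * I by push_cast; ring]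
      exact Complex.norm_exp_ofReal_mul_I _
    simp only [hone, Finset.sum_const, nsmul_eq_mul, mul_one, Finset.card_sdiff_of_subset hsub,
      Nat.card_Icc, Nat.add_sub_cancel]
    rw [Nat.cast_sub hMN]
  have hM : (M : ℝ) * ‖weylAvg u M‖ ≤ N * ‖weylAvg u M‖ := by gcongr
  have := norm_sub_norm_le ((N : ℂ) * weylAvg u N) (M * weylAvg u M)
  simp only [norm_mul, Complex.norm_natCast] at this
  rw [← sub_le_iff_le_add', le_div_iff₀ hNR]
  nlinarith

theorem tendsto_weylAvg_of_tendsto_sq {u : ℕ → ℝ}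
    (h : Tendsto (fun M => weylAvg u (M ^ 2)) atTop (𝓝 0)) :
    Tendsto (weylAvg u) atTop (𝓝 0) := by
  have hsqrt : Tendsto Nat.sqrt atTop atTop :=
    tendsto_atTop_atTop.2 fun k => ⟨k * k, fun N hN => Nat.le_sqrt.2 hN⟩
  have hbound : ∀ᶠ N in atTop,
      ‖weylAvg u N‖ ≤ ‖weylAvg u (N.sqrt ^ 2)‖ + 2 / (N.sqrt : ℝ) := by
    filter_upwards [eventually_ge_atTop 1] with N hN
    have hs : 0 < (N.sqrt : ℝ) := by exact_mod_cast Nat.sqrt_pos.2 hN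
    have hlow : (N.sqrt : ℝ) ^ 2 ≤ N := by exact_mod_cast Nat.sqrt_le' N
    have hhigh : (N : ℝ) < (N.sqrt + 1) ^ 2 := by exact_mod_cast Nat.lt_succ_sqrt' N
    refine (norm_weylAvg_le_of_le u (Nat.sqrt_le' N)).trans (add_le_add_right ?_ _)
    rw [div_le_div_iff₀ (by positivity) hs]
    push_cast
    nlinarith
  refine squeeze_zero_norm' hbound ?_
  simpa using (tendsto_zero_iff_norm_tendsto_zero.1 h).comp hsqrt |>.add
    ((tendsto_const_div_atTop_nhds_zero_nat 2).comp hsqrt)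

theorem ae_tendsto_zero_of_summable_integral {X : Type*} [MeasurableSpace X] {μ : Measure X}
    {f : ℕ → X → ℝ} (hf_nonneg : ∀ n x, 0 ≤ f n x) (hf_int : ∀ n, Integrable (f n) μ)
    (hsum : Summable fun n => ∫ x, f n x ∂μ) :
    ∀ᵐ x ∂μ, Tendsto (fun n => f n x) atTop (𝓝 0) := by
  have hnorm : ∑' n, eLpNorm (f n) 1 μ ≠ ⊤ := by
    have heq : ∀ n, eLpNorm (f n) 1 μ = ENNReal.ofReal (∫ x, f n x ∂μ) := fun n => by
      rw [eLpNorm_one_eq_lintegral_enorm, ofReal_integral_eq_lintegral_ofReal (hf_int n)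
        (Eventually.of_forall (hf_nonneg n))]
      exact lintegral_congr fun x => (Real.enorm_of_nonneg (hf_nonneg n x)).symm ▸ rfl
    simp_rw [heq]
    rw [← ENNReal.ofReal_tsum_of_nonneg (fun n => integral_nonneg (hf_nonneg n)) hsum]
    exact ENNReal.ofReal_ne_top
  filter_upwards [summable_norm_of_tsum_eLpNorm_ne_top le_rfl
    (fun n => (hf_int n).aestronglyMeasurable) hnorm] with x hx
  exact tendsto_zero_iff_norm_tendsto_zero.2 hx.tendsto_atTop_zero

theorem ae_of_ae_restrict_Ioc_of_periodic {p : ℝ → Prop} {T : ℝ} (hT : 0 < T)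
    (hp : Function.Periodic p T) (t : ℝ) (h : ∀ᵐ x ∂volume.restrict (Ioc t (t + T)), p x) :
    ∀ᵐ x, p x := by
  rw [ae_restrict_iff' measurableSet_Ioc, ae_iff] at h
  refine (isAddFundamentalDomain_Ioc hT t).measure_zero_of_invariant _ ?_ ?_
  · rintro ⟨g, k, rfl⟩
    ext x
    simp [Set.mem_vadd_set_iff_neg_vadd_mem, AddSubgroup.vadd_def, neg_add_eq_sub,
      (hp.int_mul k).sub_eq]
  · refine measure_mono_null ?_ h
    exact fun x hx hpx => hx.1 (hpx hx.2)

theorem ae_tendsto_weylAvg_int_mul {b : ℕ → ℤ} (hb : Function.Injective b) :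
    ∀ᵐ x, Tendsto (fun N => weylAvg (fun n => (b n : ℝ) * x) N) atTop (𝓝 0) := by
  set W : ℕ → ℝ → ℂ := fun N x => weylAvg (fun n => (b n : ℝ) * x) N
  have hperiodic : Function.Periodic (fun x => Tendsto (W · x) atTop (𝓝 0)) 1 := fun x => by
    simp only [W, weylAvg_int_mul_periodic b _ x]
  refine ae_of_ae_restrict_Ioc_of_periodic one_pos hperiodic 0 ?_
  rw [zero_add]
  have hint : ∀ M : ℕ, ∫ x in Ioc (0 : ℝ) 1, ‖W ((M + 1) ^ 2) x‖ ^ 2 = ((M + 1 : ℝ) ^ 2)⁻¹ :=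
    fun M => by
      rw [← intervalIntegral.integral_of_le zero_le_one,
        integral_norm_sq_weylAvg_int_mul hb.injOn]
      push_cast
      rfl
  have hsum : Summable fun M : ℕ => ((M + 1 : ℝ) ^ 2)⁻¹ := by
    simpa [one_div] using (summable_nat_add_iff 1).2 (Real.summable_one_div_nat_pow.2 one_lt_two)
  filter_upwards [ae_tendsto_zero_of_summable_integral (fun M x => sq_nonneg _)
    (fun M => ((continuous_weylAvg_int_mul b _).norm.pow 2).integrableOn_Ioc)
    (hsum.congr fun M => (hint M).symm)] with x hx
  refine tendsto_weylAvg_of_tendsto_sq ((tendsto_add_atTop_iff_nat 1).1 ?_)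
  simpa [Real.sqrt_sq (norm_nonneg _), tendsto_zero_iff_norm_tendsto_zero] using hx.sqrt

theorem stmt0 (a : ℕ → ℤ) (ha : Function.Injective a) :
    ∀ᵐ x ∂(volume : Measure ℝ), UDmod1 (fun n => (a n : ℝ) * x) := by
  have hk : ∀ k : {k : ℤ // k ≠ 0}, ∀ᵐ x ∂(volume : Measure ℝ),
      Tendsto (fun N => weylAvg (fun n => (k : ℝ) * ((a n : ℝ) * x)) N) atTop (𝓝 0) := by
    rintro ⟨k, hk⟩
    simpa only [Int.cast_mul, mul_assoc] using
      ae_tendsto_weylAvg_int_mul (b := fun n => k * a n) ((mul_right_injective₀ hk).comp ha)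
  filter_upwards [ae_all_iff.2 hk] with x hx k hk
  exact hx ⟨k, hk⟩
end

section
/- Let (a_n) be an injective sequence of integers, and for each N ∈ ℕ let S_N ⊆ ℕ be a finite set with ∑_N |S_N|^{−1} < ∞. Then for every continuous function f : ℝ/ℤ → ℝ, for Lebesgue almost every x ∈ [0,1], (1/|S_N|) ∑_{n ∈ S_N} f(a_n x mod 1) → ∫_0^1 f(t) dt as N → ∞. -/
open Filter MeasureTheory Set
open scoped Topology
open AddCircle

/-!
For a nonzero frequency `k`, the averages `F_N y = |S_N|⁻¹ ∑_{n ∈ S_N} e(k a_n y)` on the circle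
satisfy `‖F_N‖₂² = |S_N|⁻¹` by orthogonality of characters, since `n ↦ k a_n` is injective.
Summability of `|S_N|⁻¹` makes `∑_N |F_N y|²` integrable, hence finite almost everywhere, so
`F_N → 0` almost everywhere. Intersecting over the countably many `k` gives a full-measure set
of `y` on which the averages of every character converge to its integral. The averaging
functionals have norm at most one and trigonometric polynomials are dense in `C(𝕋, ℂ)`, so on
that set the averages of every continuous function converge to its integral.
-/

section Functionals

variable {X : Type*} [TopologicalSpace X]

noncomputable def empiricalMean {ι : Type*} (s : Finset ι) (p : ι → X) : C(X, ℂ) →L[ℂ] ℂ :=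
  (s.card : ℂ)⁻¹ • ∑ n ∈ s, ContinuousMap.evalCLM ℂ (p n)

theorem empiricalMean_apply {ι : Type*} (s : Finset ι) (p : ι → X) (g : C(X, ℂ)) :
    empiricalMean s p g = (s.card : ℂ)⁻¹ * ∑ n ∈ s, g (p n) := by
  simp [empiricalMean]

variable [CompactSpace X]

theorem norm_empiricalMean_le {ι : Type*} (s : Finset ι) (p : ι → X) :
    ‖empiricalMean s p‖ ≤ 1 := by
  refine ContinuousLinearMap.opNorm_le_bound _ zero_le_one fun g => ?_
  rw [empiricalMean_apply, norm_mul, norm_inv, Complex.norm_natCast, one_mul]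
  calc (s.card : ℝ)⁻¹ * ‖∑ n ∈ s, g (p n)‖ ≤ (s.card : ℝ)⁻¹ * ∑ _n ∈ s, ‖g‖ := by
        gcongr
        exact (norm_sum_le _ _).trans (Finset.sum_le_sum fun n _ => g.norm_coe_le_norm _)
    _ = ((s.card : ℝ)⁻¹ * s.card) * ‖g‖ := by
        rw [Finset.sum_const, nsmul_eq_mul, mul_assoc]
    _ ≤ ‖g‖ := mul_le_of_le_one_left (norm_nonneg g) inv_mul_le_one

variable [MeasurableSpace X] [OpensMeasurableSpace X]

noncomputable def integralCLM (μ : Measure X) [IsFiniteMeasure μ] : C(X, ℂ) →L[ℂ] ℂ :=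
  LinearMap.mkContinuous
    { toFun := fun g => ∫ x, g x ∂μ
      map_add' := fun g h => integral_add ((BoundedContinuousFunction.mkOfCompact g).integrable μ)
        ((BoundedContinuousFunction.mkOfCompact h).integrable μ)
      map_smul' := fun c g => integral_smul c _ }
    (μ.real univ) fun g => by
      simpa using (BoundedContinuousFunction.mkOfCompact g).norm_integral_le_mul_norm μ

theorem integralCLM_apply (μ : Measure X) [IsFiniteMeasure μ] (g : C(X, ℂ)) :
    integralCLM μ g = ∫ x, g x ∂μ := rfl

end Functionals

theorem tendsto_of_tendsto_on_dense_span {ι 𝕜 E F : Type*} [NontriviallyNormedField 𝕜]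
    [SeminormedAddCommGroup E] [NormedSpace 𝕜 E] [SeminormedAddCommGroup F] [NormedSpace 𝕜 F]
    {l : Filter ι} {A : ι → E →L[𝕜] F} {C : NNReal} (hA : ∀ i, ‖A i‖₊ ≤ C) (L : E →L[𝕜] F)
    {s : Set E} (hs : (Submodule.span 𝕜 s).topologicalClosure = ⊤)
    (h : ∀ x ∈ s, Tendsto (A · x) l (𝓝 (L x))) (x : E) :
    Tendsto (A · x) l (𝓝 (L x)) := by
  let P : Submodule 𝕜 E :=
    { carrier := {x | Tendsto (A · x) l (𝓝 (L x))}
      add_mem' := fun {x y} hx hy => by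
        simpa only [mem_ofPred_eq, map_add] using hx.add hy
      zero_mem' := by simpa only [mem_ofPred_eq, map_zero] using tendsto_const_nhds
      smul_mem' := fun c x hx => by
        simpa only [mem_ofPred_eq, map_smul] using hx.const_smul c }
  have hP : IsClosed (P : Set E) :=
    Equicontinuous.isClosed_setOfPred_tendsto (LipschitzWith.uniformEquicontinuous _ C
      fun i => (A i).lipschitz.weaken (hA i)).equicontinuous L.continuous
  have hP_top : (⊤ : Submodule 𝕜 E) ≤ P :=
    hs ▸ Submodule.topologicalClosure_minimal _ (Submodule.span_le.2 h) hP
  exact hP_top Submodule.mem_top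

theorem ae_tendsto_zero_of_summable_integral_norm {α E : Type*} [MeasurableSpace α]
    {μ : Measure α} [NormedAddCommGroup E] {f : ℕ → α → E} (hf : ∀ n, Integrable (f n) μ)
    (hsum : Summable fun n => ∫ x, ‖f n x‖ ∂μ) :
    ∀ᵐ x ∂μ, Tendsto (f · x) atTop (𝓝 0) := by
  have h_ne_top : ∑' n, eLpNorm (f n) 1 μ ≠ ⊤ := by
    simp_rw [eLpNorm_one_eq_lintegral_enorm, ← ofReal_integral_norm_eq_lintegral_enorm (hf _),
      ← ENNReal.ofReal_tsum_of_nonneg (fun n => integral_nonneg fun x => norm_nonneg _) hsum]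
    exact ENNReal.ofReal_ne_top
  filter_upwards [summable_norm_of_tsum_eLpNorm_ne_top le_rfl (fun n => (hf n).1) h_ne_top]
    with x hx
  exact tendsto_zero_iff_norm_tendsto_zero.2 hx.tendsto_atTop_zero

namespace AddCircle

variable {T : ℝ} [Fact (0 < T)]

theorem integral_fourier (n : ℤ) :
    ∫ y : AddCircle T, fourier n y ∂haarAddCircle = if n = 0 then 1 else 0 := by
  simpa [fourierCoeff, fourier_zero, Pi.single_apply, eq_comm] using
    congrFun (fourierCoeff_fourier (T := T) n) 0

theorem integral_norm_sum_fourier_sq {ι : Type*} {s : Finset ι} {c : ι → ℤ} (hc : InjOn c s) :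
    ∫ y : AddCircle T, ‖∑ n ∈ s, fourier (c n) y‖ ^ 2 ∂haarAddCircle = s.card := by
  have h_int (k : ℤ) : Integrable (fourier (T := T) k) haarAddCircle :=
    (BoundedContinuousFunction.mkOfCompact _).integrable _
  have h_expand (y : AddCircle T) : ((‖∑ n ∈ s, fourier (c n) y‖ ^ 2 : ℝ) : ℂ) =
      ∑ n ∈ s, ∑ m ∈ s, fourier (c n - c m) y := by
    rw [Complex.ofReal_pow, ← Complex.mul_conj', map_sum, Finset.sum_mul_sum]
    simp_rw [← fourier_neg, ← fourier_add, ← sub_eq_add_neg]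
  have h_diag : ∀ n ∈ s, ∑ m ∈ s, (if c n = c m then 1 else 0 : ℂ) = 1 := fun n hn => by
    classical
    rw [Finset.sum_congr rfl fun m hm => if_congr (hc.eq_iff hn hm) rfl rfl,
      Finset.sum_ite_eq, if_pos hn]
  apply Complex.ofReal_injective
  rw [← integral_complex_ofReal, integral_congr_ae (Eventually.of_forall h_expand),
    integral_finsetSum _ fun n _ => integrable_finsetSum _ fun m _ => h_int _]
  simp_rw [integral_finsetSum _ fun m _ => h_int _, integral_fourier, sub_eq_zero]
  rw [Finset.sum_congr rfl h_diag]
  simp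

theorem ae_tendsto_average_fourier_zero {ι : Type*} {c : ι → ℤ} {S : ℕ → Finset ι}
    (hc : ∀ N, InjOn c (S N)) (hsum : Summable fun N => ((S N).card : ℝ)⁻¹) :
    ∀ᵐ y ∂(haarAddCircle : Measure (AddCircle T)),
      Tendsto (fun N => ((S N).card : ℂ)⁻¹ * ∑ n ∈ S N, fourier (c n) y) atTop (𝓝 0) := by
  set F : ℕ → AddCircle T → ℂ := fun N y => ((S N).card : ℂ)⁻¹ * ∑ n ∈ S N, fourier (c n) y
  have hF_cont (N : ℕ) : Continuous (F N) := by fun_prop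
  have hF_sq (N : ℕ) : ∫ y, ‖F N y‖ ^ 2 ∂haarAddCircle = ((S N).card : ℝ)⁻¹ := by
    simp_rw [F, norm_mul, mul_pow, integral_const_mul, integral_norm_sum_fourier_sq (hc N),
      norm_inv, Complex.norm_natCast]
    rcases eq_or_ne ((S N).card : ℝ) 0 with h0 | h0
    · simp [h0]
    · field_simp
  have hF_sq_to_zero := ae_tendsto_zero_of_summable_integral_norm (μ := haarAddCircle)
    (f := fun N y => ‖F N y‖ ^ 2)
    (fun N => (BoundedContinuousFunction.mkOfCompact ⟨_, (hF_cont N).norm.pow 2⟩).integrable _)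
    (by simpa [hF_sq] using hsum)
  filter_upwards [hF_sq_to_zero] with y hy
  refine tendsto_zero_iff_norm_tendsto_zero.2 ?_
  simpa only [Real.sqrt_sq (norm_nonneg _), Real.sqrt_zero] using hy.sqrt

theorem ae_tendsto_empiricalMean_fourier {ι : Type*} {a : ι → ℤ} {S : ℕ → Finset ι}
    (ha : ∀ N, InjOn a (S N)) (hne : ∀ N, (S N).Nonempty)
    (hsum : Summable fun N => ((S N).card : ℝ)⁻¹) (j : ℤ) :
    ∀ᵐ y ∂(haarAddCircle : Measure (AddCircle T)),
      Tendsto (fun N => empiricalMean (S N) (fun n => a n • y) (fourier j)) atTop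
        (𝓝 (integralCLM (haarAddCircle (T := T)) (fourier j))) := by
  simp_rw [empiricalMean_apply, integralCLM_apply, integral_fourier]
  rcases eq_or_ne j 0 with rfl | hj
  · refine Eventually.of_forall fun y => tendsto_const_nhds.congr fun N => ?_
    have hcard : ((S N).card : ℂ) ≠ 0 := by exact_mod_cast (hne N).card_pos.ne'
    simp [hcard]
  · have hc (N : ℕ) : InjOn (fun n => j * a n) (S N) := fun n hn m hm h =>
      ha N hn hm (mul_left_cancel₀ hj h)
    filter_upwards [ae_tendsto_average_fourier_zero hc hsum] with y hy
    simpa [hj, fourier_apply, smul_smul] using hy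

theorem tendsto_empiricalMean_of_forall_fourier {ι κ : Type*} {l : Filter κ}
    {S : κ → Finset ι} {p : ι → AddCircle T}
    (h : ∀ j : ℤ, Tendsto (fun N => empiricalMean (S N) p (fourier j)) l
      (𝓝 (integralCLM (haarAddCircle (T := T)) (fourier j))))
    (g : C(AddCircle T, ℂ)) :
    Tendsto (fun N => empiricalMean (S N) p g) l (𝓝 (integralCLM haarAddCircle g)) := by
  refine tendsto_of_tendsto_on_dense_span (C := 1) (fun N => ?_) _ span_fourier_closure_eq_top
    ?_ g
  · exact_mod_cast norm_empiricalMean_le (S N) p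
  · rintro _ ⟨j, rfl⟩
    exact h j

theorem ae_Icc_of_ae_haarAddCircle (t : ℝ) {P : AddCircle T → Prop}
    (h : ∀ᵐ y ∂haarAddCircle, P y) : ∀ᵐ x : ℝ, x ∈ Icc t (t + T) → P x := by
  replace h : ∀ᵐ y ∂volume, P y :=
    volume_eq_smul_haarAddCircle (T := T) ▸ Measure.ae_smul_measure h _
  rw [← ae_restrict_iff' measurableSet_Icc, ← Measure.restrict_congr_set Ioc_ae_eq_Icc]
  exact (AddCircle.measurePreserving_mk T t).quasiMeasurePreserving.ae h

end AddCircle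

theorem stmt4 (a : ℕ → ℤ) (ha : Function.Injective a)
    (S : ℕ → Finset ℕ) (hne : ∀ N, (S N).Nonempty)
    (hsum : Summable (fun N => ((S N).card : ℝ)⁻¹))
    (f : AddCircle (1 : ℝ) → ℝ) (hf : Continuous f) :
    ∀ᵐ x ∂(volume : Measure ℝ), x ∈ Set.Icc (0 : ℝ) 1 →
      Tendsto (fun N => ((S N).card : ℝ)⁻¹ * ∑ n ∈ S N, f (((a n : ℝ) * x : ℝ)))
        atTop (nhds (∫ t : AddCircle (1 : ℝ), f t)) := by
  have h_haar : (haarAddCircle : Measure (AddCircle (1 : ℝ))) = volume := by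
    simp [volume_eq_smul_haarAddCircle]
  have h_circle := ae_all_iff.2 <|
    ae_tendsto_empiricalMean_fourier (T := 1) (fun N => ha.injOn) hne hsum
  filter_upwards [ae_Icc_of_ae_haarAddCircle 0 h_circle] with x hx hIcc
  have h_lim := tendsto_empiricalMean_of_forall_fourier (hx (by rwa [zero_add]))
    ⟨fun t => (f t : ℂ), by fun_prop⟩
  simp_rw [empiricalMean_apply, integralCLM_apply, h_haar] at h_lim
  rw [← tendsto_ofReal_iff]
  convert h_lim using 2 with N
  · simp only [ContinuousMap.coe_mk, ← zsmul_eq_mul, coe_zsmul]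
    push_cast
    rfl
  · exact integral_complex_ofReal.symm
end

section
/- Let a : ℕ → ℝ and suppose there exist ε, g > 0 such that |a(n) − a(m)| > g whenever m > n + n/(log n)^{1+ε}. Then for every ε' < ε and all sufficiently large N, (1/N²) ∑_{1 ≤ m < n ≤ N} min(|a(n) − a(m)|^{−1}, 1) ≤ 1/(log N)^{1+ε'}. In particular a is 1-scattered. -/
open Filter MeasureTheory Set
open scoped Topology

/-!
Write `e = 1 + ε`, fix a row `n ≤ N` of the double sum and put `b = ⌈2 ^ e N / (log N) ^ e⌉`.
For `√N ≤ m ≤ N` one has `m / (log m) ^ e ≤ b`, so the hypothesis makes `a m` and `a n` more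
than `g` apart as soon as `b < m` and `m + b < n`; the remaining at most `2b` indices `m < n`
contribute at most `1` each. The same separation shows that far indices whose values lie within
`g` of each other are within `b` of each other, so every annulus `k g ≤ |a n - a m| < (k + 1) g`
contains at most `2 (b + 1)` far indices. Summing `1 / (k g)` over the annuli with
`k ≤ N / b ≈ (log N) ^ e` (and bounding the rest crudely) gives `O(b log log N)` per row, hence
a scatter sum of order `log log N / (log N) ^ e`, which beats `(log N) ^ (-e')` for `e' < e`.
-/

theorem Finset.card_le_add_one_of_forall_lt_imp_le_add {S : Finset ℕ} {b : ℕ}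
    (hS : ∀ m ∈ S, ∀ m' ∈ S, m < m' → m' ≤ m + b) : S.card ≤ b + 1 := by
  rcases S.eq_empty_or_nonempty with rfl | hne
  · simp
  have hsub : S ⊆ Finset.Icc (S.min' hne) (S.min' hne + b) := fun m hm => by
    rcases (S.min'_le m hm).eq_or_lt with heq | hlt
    · simp [← heq]
    · exact Finset.mem_Icc.2 ⟨hlt.le, hS _ (S.min'_mem hne) m hm hlt⟩
  exact (Finset.card_le_card hsub).trans_eq (by rw [Nat.card_Icc]; omega)

theorem sum_inv_le_of_card_fiber_le {ι : Type*} (S : Finset ι) (h : ι → ℕ)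
    (hpos : ∀ i ∈ S, 0 < h i) {c : ℕ} (hc : ∀ k, (S.filter fun i => h i = k).card ≤ c)
    {K : ℕ} (hK : 0 < K) :
    ∑ i ∈ S, ((h i : ℝ))⁻¹ ≤ c * (1 + Real.log K) + S.card / K := by
  classical
  rw [← Finset.sum_filter_add_sum_filter_not S (fun i => h i ≤ K)]
  gcongr ?_ + ?_
  · have hmaps : ∀ i ∈ S.filter (fun i => h i ≤ K), h i ∈ Finset.Icc 1 K := fun i hi => by
      rw [Finset.mem_filter] at hi
      exact Finset.mem_Icc.2 ⟨hpos i hi.1, hi.2⟩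
    rw [← Finset.sum_fiberwise_of_maps_to hmaps]
    calc ∑ k ∈ Finset.Icc 1 K, ∑ i ∈ S.filter (fun i => h i ≤ K) with h i = k, ((h i : ℝ))⁻¹
        ≤ ∑ k ∈ Finset.Icc 1 K, (c : ℝ) * (k : ℝ)⁻¹ := by
          refine Finset.sum_le_sum fun k _ => ?_
          refine (Finset.sum_le_card_nsmul _ _ (k : ℝ)⁻¹ fun i hi => ?_).trans ?_
          · rw [(Finset.mem_filter.1 hi).2]
          rw [nsmul_eq_mul]
          gcongr
          rw [Finset.filter_filter]
          exact_mod_cast (Finset.card_le_card (Finset.monotone_filter_right S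
            fun i _ (hi : h i ≤ K ∧ h i = k) => hi.2)).trans (hc k)
      _ = c * (harmonic K : ℝ) := by simp [harmonic_eq_sum_Icc, Finset.mul_sum]
      _ ≤ c * (1 + Real.log K) := by gcongr; exact harmonic_le_one_add_log K
  · calc ∑ i ∈ S.filter (fun i => ¬h i ≤ K), ((h i : ℝ))⁻¹
        ≤ (S.filter fun i => ¬h i ≤ K).card • (K : ℝ)⁻¹ := by
          refine Finset.sum_le_card_nsmul _ _ _ fun i hi => ?_
          have : K < h i := not_le.1 (Finset.mem_filter.1 hi).2
          gcongr
      _ ≤ S.card / K := by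
          rw [nsmul_eq_mul, div_eq_mul_inv]
          gcongr
          exact Finset.filter_subset _ _

section Clusters

variable {x : ℕ → ℝ} {S : Finset ℕ} {g : ℝ} {b : ℕ}

theorem card_filter_mem_Icc_le
    (hS : ∀ m ∈ S, ∀ m' ∈ S, m < m' → |x m - x m'| ≤ g → m' ≤ m + b) (c : ℝ) :
    (S.filter fun m => x m ∈ Icc c (c + g)).card ≤ b + 1 := by
  refine Finset.card_le_add_one_of_forall_lt_imp_le_add fun m hm m' hm' hlt => ?_
  simp only [Finset.mem_filter, mem_Icc] at hm hm'
  exact hS m hm.1 m' hm'.1 hlt (abs_sub_le_iff.2 ⟨by linarith, by linarith⟩)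

theorem card_filter_floor_abs_sub_div_eq_le (hg : 0 < g)
    (hS : ∀ m ∈ S, ∀ m' ∈ S, m < m' → |x m - x m'| ≤ g → m' ≤ m + b) (y : ℝ) (k : ℕ) :
    (S.filter fun m => ⌊|y - x m| / g⌋₊ = k).card ≤ 2 * (b + 1) := by
  have hsub : S.filter (fun m => ⌊|y - x m| / g⌋₊ = k) ⊆
      S.filter (fun m => x m ∈ Icc (y + k * g) (y + k * g + g)) ∪
      S.filter (fun m => x m ∈ Icc (y - k * g - g) (y - k * g - g + g)) := by
    intro m hm
    simp only [Finset.mem_filter, Finset.mem_union, mem_Icc] at hm ⊢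
    obtain ⟨hmS, hk⟩ := hm
    have hfl := (Nat.floor_eq_iff (by positivity)).1 hk
    rw [le_div_iff₀ hg, div_lt_iff₀ hg] at hfl
    rcases le_total (x m) y with hxy | hxy
    · rw [abs_of_nonneg (sub_nonneg.2 hxy)] at hfl
      right; exact ⟨hmS, by linarith, by linarith⟩
    · rw [abs_of_nonpos (sub_nonpos.2 hxy)] at hfl
      left; exact ⟨hmS, by linarith, by linarith⟩
  calc _ ≤ _ := Finset.card_le_card hsub
    _ ≤ _ := Finset.card_union_le _ _
    _ ≤ (b + 1) + (b + 1) := add_le_add (card_filter_mem_Icc_le hS _) (card_filter_mem_Icc_le hS _)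
    _ = 2 * (b + 1) := by ring

theorem sum_inv_abs_sub_le (hg : 0 < g)
    (hS : ∀ m ∈ S, ∀ m' ∈ S, m < m' → |x m - x m'| ≤ g → m' ≤ m + b) {y : ℝ}
    (hfar : ∀ m ∈ S, g ≤ |y - x m|) {K : ℕ} (hK : 0 < K) :
    ∑ m ∈ S, |y - x m|⁻¹ ≤ (2 * (b + 1) * (1 + Real.log K) + S.card / K) / g := by
  set k : ℕ → ℕ := fun m => ⌊|y - x m| / g⌋₊
  have hk : ∀ m ∈ S, 0 < k m := fun m hm =>
    Nat.floor_pos.2 ((one_le_div hg).2 (hfar m hm))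
  have hterm : ∀ m ∈ S, |y - x m|⁻¹ ≤ g⁻¹ * ((k m : ℝ))⁻¹ := fun m hm => by
    rw [← mul_inv]
    have hkm : (k m : ℝ) ≤ |y - x m| / g := Nat.floor_le (by positivity)
    have : (0 : ℝ) < k m := by exact_mod_cast hk m hm
    gcongr
    rwa [le_div_iff₀ hg, mul_comm] at hkm
  calc ∑ m ∈ S, |y - x m|⁻¹ ≤ g⁻¹ * ∑ m ∈ S, ((k m : ℝ))⁻¹ := by
        rw [Finset.mul_sum]; exact Finset.sum_le_sum hterm
    _ ≤ g⁻¹ * ((2 * (b + 1) : ℕ) * (1 + Real.log K) + S.card / K) := by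
        gcongr
        exact sum_inv_le_of_card_fiber_le S k hk
          (card_filter_floor_abs_sub_div_eq_le hg hS y) hK
    _ = _ := by push_cast; ring

end Clusters

def GapSeparated (a : ℕ → ℝ) (g : ℝ) (b N : ℕ) : Prop :=
  ∀ m n, b < m → n ≤ N → m + b < n → g < |a n - a m|

noncomputable def scatterWeight (a : ℕ → ℝ) (n m : ℕ) : ℝ :=
  if a n = a m then 1 else min (|a n - a m| ^ (-1 : ℝ)) 1

theorem scatterSum_one_eq (a : ℕ → ℝ) (N : ℕ) :
    scatterSum a 1 N =
      ((N : ℝ) ^ 2)⁻¹ * ∑ n ∈ Finset.Icc 1 N, ∑ m ∈ Finset.Ico 1 n, scatterWeight a n m :=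
  rfl

section ScatterWeight

variable {a : ℕ → ℝ} {n m : ℕ}

theorem scatterWeight_le_one : scatterWeight a n m ≤ 1 := by
  unfold scatterWeight; split_ifs <;> simp

theorem scatterWeight_le_inv (h : 0 < |a n - a m|) : scatterWeight a n m ≤ |a n - a m|⁻¹ := by
  rw [scatterWeight, if_neg (sub_ne_zero.1 (abs_pos.1 h)), ← Real.rpow_neg_one]
  exact min_le_left _ _

end ScatterWeight

theorem sum_scatterWeight_le {a : ℕ → ℝ} {g : ℝ} (hg : 0 < g) {b N n K : ℕ}
    (hsep : GapSeparated a g b N) (hn : n ≤ N) (hK : 0 < K) :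
    ∑ m ∈ Finset.Ico 1 n, scatterWeight a n m ≤
      2 * b + (2 * (b + 1) * (1 + Real.log K) + N / K) / g := by
  set far := (Finset.Ico 1 n).filter fun m => b < m ∧ m + b < n
  have hnear : (Finset.Ico 1 n).filter (fun m => ¬(b < m ∧ m + b < n)) ⊆
      Finset.Icc 1 b ∪ Finset.Ico (n - b) n := fun m hm => by
    simp only [Finset.mem_filter, Finset.mem_Ico, Finset.mem_union, Finset.mem_Icc] at hm ⊢
    omega
  have hcluster : ∀ m ∈ far, ∀ m' ∈ far, m < m' → |a m - a m'| ≤ g → m' ≤ m + b := by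
    intro m hm m' hm' hlt hclose
    simp only [far, Finset.mem_filter, Finset.mem_Ico] at hm hm'
    by_contra! hfar
    exact (hsep m m' hm.2.1 (by omega) hfar).not_ge (by rwa [abs_sub_comm])
  have hfar : ∀ m ∈ far, g < |a n - a m| := fun m hm => by
    simp only [far, Finset.mem_filter, Finset.mem_Ico] at hm
    exact hsep m n hm.2.1 hn hm.2.2
  rw [← Finset.sum_filter_add_sum_filter_not _ (fun m => b < m ∧ m + b < n), add_comm]
  gcongr ?_ + ?_
  · calc _ ≤ ∑ m ∈ (Finset.Ico 1 n).filter (fun m => ¬(b < m ∧ m + b < n)), (1 : ℝ) :=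
          Finset.sum_le_sum fun _ _ => scatterWeight_le_one
      _ ≤ ((Finset.Icc 1 b ∪ Finset.Ico (n - b) n).card : ℝ) := by
          rw [Finset.sum_const, nsmul_one]; exact_mod_cast Finset.card_le_card hnear
      _ ≤ 2 * b := by
          have := Finset.card_union_le (Finset.Icc 1 b) (Finset.Ico (n - b) n)
          simp only [Nat.card_Icc, Nat.card_Ico] at this
          exact_mod_cast (by omega : _ ≤ 2 * b)
  · calc _ ≤ ∑ m ∈ far, |a n - a m|⁻¹ :=
          Finset.sum_le_sum fun m hm => scatterWeight_le_inv (hg.trans (hfar m hm))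
      _ ≤ (2 * (b + 1) * (1 + Real.log K) + far.card / K) / g :=
          sum_inv_abs_sub_le hg hcluster (fun m hm => (hfar m hm).le) hK
      _ ≤ _ := by
          gcongr
          exact_mod_cast (Finset.card_filter_le _ _).trans (by simp; omega)

theorem scatterSum_one_le {a : ℕ → ℝ} {g : ℝ} (hg : 0 < g) {b N : ℕ}
    (hsep : GapSeparated a g b N) (hb : 0 < b) (hbN : b ≤ N) :
    scatterSum a 1 N ≤ 2 * b / N * (1 + (3 + 2 * Real.log (N / b)) / g) := by
  set K := N / b
  have hK : 0 < K := Nat.div_pos hbN hb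
  have hN : (0 : ℝ) < N := by exact_mod_cast hb.trans_le hbN
  have hNK : (N : ℝ) / K ≤ 2 * b := by
    rw [div_le_iff₀ (by positivity)]
    have : N < K * b + b := Nat.lt_div_mul_add hb
    exact_mod_cast (by nlinarith : N ≤ 2 * b * K)
  have hlogK : Real.log K ≤ Real.log (N / b) := Real.log_le_log (by positivity) Nat.cast_div_le
  set R : ℝ := 2 * b * (1 + (3 + 2 * Real.log (N / b)) / g)
  have hrow : ∀ n ∈ Finset.Icc 1 N, ∑ m ∈ Finset.Ico 1 n, scatterWeight a n m ≤ R := by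
    intro n hn
    refine (sum_scatterWeight_le hg hsep (Finset.mem_Icc.1 hn).2 hK).trans ?_
    have hb1 : (b : ℝ) + 1 ≤ 2 * b := by
      have : (1 : ℝ) ≤ b := by exact_mod_cast hb
      linarith
    calc 2 * (b : ℝ) + (2 * (b + 1) * (1 + Real.log K) + N / K) / g
        ≤ 2 * b + (2 * (2 * b) * (1 + Real.log (N / b)) + 2 * b) / g := by
          have := Real.log_natCast_nonneg K
          gcongr 2 * (b : ℝ) + (2 * ?_ * (1 + ?_) + ?_) / g
      _ = R := by ring
  calc scatterSum a 1 N
      ≤ ((N : ℝ) ^ 2)⁻¹ * ((Finset.Icc 1 N).card • R) := by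
        rw [scatterSum_one_eq]
        gcongr
        exact Finset.sum_le_card_nsmul _ _ _ hrow
    _ = _ := by
        rw [Nat.card_Icc, nsmul_eq_mul, Nat.add_sub_cancel]
        unfold R
        field_simp

theorem div_log_rpow_le_of_sqrt_le {e x y : ℝ} (he : 0 ≤ e) (hy : 1 < y) (hx : √y ≤ x)
    (hxy : x ≤ y) : x / Real.log x ^ e ≤ 2 ^ e * y / Real.log y ^ e := by
  have hL : 0 < Real.log y := Real.log_pos hy
  have hhalf : Real.log y / 2 ≤ Real.log x := by
    rw [← Real.log_sqrt (by linarith)]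
    exact Real.log_le_log (by positivity) hx
  calc x / Real.log x ^ e ≤ y / (Real.log y / 2) ^ e := by gcongr
    _ = 2 ^ e * y / Real.log y ^ e := by
      rw [Real.div_rpow hL.le zero_le_two]
      field_simp

theorem eventually_log_rpow_le_sqrt (e : ℝ) : ∀ᶠ x : ℝ in atTop, Real.log x ^ e ≤ √x := by
  filter_upwards [(isLittleO_log_rpow_rpow_atTop e one_half_pos).bound one_pos,
    eventually_ge_atTop 0] with x hx hx0
  rw [Real.sqrt_eq_rpow]
  calc Real.log x ^ e ≤ ‖Real.log x ^ e‖ := Real.le_norm_self _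
    _ ≤ 1 * ‖x ^ (1 / 2 : ℝ)‖ := hx
    _ = x ^ (1 / 2 : ℝ) := by rw [one_mul, Real.norm_of_nonneg (by positivity)]

theorem eventually_add_mul_log_div_rpow_le (C D : ℝ) {e e' : ℝ} (he' : e' < e) :
    ∀ᶠ x : ℝ in atTop, (C + D * Real.log x) / x ^ e ≤ (x ^ e')⁻¹ := by
  have hs : 0 < e - e' := sub_pos.2 he'
  have hlog : Tendsto (fun x => Real.log x * x ^ (-(e - e'))) atTop (𝓝 0) := by
    refine (isLittleO_log_rpow_atTop hs).tendsto_div_nhds_zero.congr' ?_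
    filter_upwards [eventually_gt_atTop 0] with x hx
    rw [Real.rpow_neg hx.le, div_eq_mul_inv]
  have hlim : Tendsto (fun x => (C + D * Real.log x) * x ^ (-(e - e'))) atTop (𝓝 0) := by
    simpa [add_mul, mul_assoc] using
      ((tendsto_rpow_neg_atTop hs).const_mul C).add (hlog.const_mul D)
  filter_upwards [hlim.eventually_le_const one_pos, eventually_gt_atTop 0] with x hle hx
  calc (C + D * Real.log x) / x ^ e
      = (C + D * Real.log x) * x ^ (-(e - e')) * (x ^ e')⁻¹ := by
        rw [mul_assoc, ← Real.rpow_neg hx.le, ← Real.rpow_add hx, div_eq_mul_inv,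
          ← Real.rpow_neg hx.le]
        ring_nf
    _ ≤ (x ^ e')⁻¹ := mul_le_of_le_one_left (by positivity) hle

theorem sqrt_le_mul_div_of_le_sqrt {c x y : ℝ} (hc : 1 ≤ c) (hy : 0 < y) (hyx : y ≤ √x) :
    √x ≤ c * x / y := by
  have hx : 0 ≤ x := (Real.sqrt_pos.1 (hy.trans_le hyx)).le
  rw [le_div_iff₀ hy]
  calc √x * y ≤ √x * √x := by gcongr
    _ = x := Real.mul_self_sqrt hx
    _ ≤ c * x := le_mul_of_one_le_left hx hc

def WeylGap (a : ℕ → ℝ) (e g : ℝ) : Prop :=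
  ∀ n m : ℕ, 1 < n → (n : ℝ) + n / Real.log n ^ e < m → g < |a n - a m|

theorem WeylGap.gapSeparated {a : ℕ → ℝ} {e g : ℝ} (h : WeylGap a e g) (he : 0 ≤ e)
    {b N : ℕ} (hN : 1 < N) (hsqrt : √N ≤ b) (hb : 2 ^ e * N / Real.log N ^ e ≤ b) :
    GapSeparated a g b N := by
  intro m n hbm hnN hmn
  have hm : (b : ℝ) ≤ m := by exact_mod_cast hbm.le
  have hb1 : 1 ≤ b := by
    have : (1 : ℝ) ≤ b := (Real.one_le_sqrt.2 (by exact_mod_cast hN.le)).trans hsqrt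
    exact_mod_cast this
  rw [abs_sub_comm]
  refine h m n (by omega) ?_
  calc (m : ℝ) + m / Real.log m ^ e ≤ m + b := by
        gcongr
        refine (div_log_rpow_le_of_sqrt_le he (by exact_mod_cast hN) (hsqrt.trans hm) ?_).trans hb
        exact_mod_cast (by omega : m ≤ N)
    _ < n := by exact_mod_cast hmn

theorem scatterSum_one_le_of_log_rpow_le {a : ℕ → ℝ} {e g : ℝ} (he : 0 < e) (hg : 0 < g)
    (h : WeylGap a e g) {N : ℕ} (hN : 2 ≤ N) (hsqrt : Real.log N ^ e ≤ √N)
    (hlarge : 2 ^ (e + 1) ≤ Real.log N ^ e) :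
    scatterSum a 1 N ≤ (2 ^ (e + 1) * (2 + 6 / g) + 2 ^ (e + 1) * (4 * e / g) *
      Real.log (Real.log N)) / Real.log N ^ e := by
  set L := Real.log N
  set B := 2 ^ e * N / L ^ e
  set b := ⌈B⌉₊
  have hN1 : (1 : ℝ) < N := by exact_mod_cast hN
  have hL : 0 < L := Real.log_pos hN1
  have h2e : (1 : ℝ) ≤ 2 ^ e := Real.one_le_rpow one_le_two he.le
  have hsqrtB : √N ≤ B := sqrt_le_mul_div_of_le_sqrt h2e (by positivity) hsqrt
  have hBhalf : B ≤ N / 2 := by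
    rw [Real.rpow_add_one two_ne_zero] at hlarge
    rw [div_le_div_iff₀ (by positivity) two_pos]
    nlinarith
  have hB1 : 1 ≤ B := (Real.one_le_sqrt.2 hN1.le).trans hsqrtB
  have hBb : B ≤ b := Nat.le_ceil B
  have hbB : (b : ℝ) ≤ 2 * B := Nat.ceil_le_two_mul (by linarith)
  have hbN : b ≤ N := by
    have : (b : ℝ) ≤ N := by linarith
    exact_mod_cast this
  have hb : 0 < b := Nat.ceil_pos.2 (by linarith)
  have hb_div : (b : ℝ) / N ≤ 2 ^ (e + 1) / L ^ e := by
    rw [Real.rpow_add_one two_ne_zero, div_le_div_iff₀ (by positivity) (by positivity)]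
    calc (b : ℝ) * L ^ e ≤ 2 * B * L ^ e := by gcongr
      _ = 2 ^ e * 2 * N := by unfold B; field_simp
  have hNb : 1 ≤ (N : ℝ) / b := by
    rw [le_div_iff₀ (by positivity), one_mul]; exact_mod_cast hbN
  have hlogNb : Real.log (N / b) ≤ e * Real.log L := by
    rw [← Real.log_rpow hL]
    refine Real.log_le_log (by positivity) ?_
    calc (N : ℝ) / b ≤ N / B := by gcongr
      _ = L ^ e / 2 ^ e := by unfold B; field_simp
      _ ≤ L ^ e := div_le_self (by positivity) h2e
  have := Real.log_nonneg hNb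
  calc scatterSum a 1 N ≤ 2 * (b / N) * (1 + (3 + 2 * Real.log (N / b)) / g) := by
        rw [← mul_div_assoc]
        exact scatterSum_one_le hg (h.gapSeparated he.le hN (hsqrtB.trans hBb) hBb) hb
          hbN
    _ ≤ 2 * (2 ^ (e + 1) / L ^ e) * (1 + (3 + 2 * (e * Real.log L)) / g) := by gcongr
    _ = _ := by
        field_simp
        ring

theorem eventually_scatterSum_one_le_inv_log_rpow {a : ℕ → ℝ} {e g : ℝ} (he : 0 < e)
    (hg : 0 < g) (h : WeylGap a e g) {e' : ℝ} (he' : e' < e) :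
    ∀ᶠ N : ℕ in atTop, scatterSum a 1 N ≤ (Real.log N ^ e')⁻¹ := by
  have hlog : Tendsto (fun N : ℕ => Real.log N) atTop atTop :=
    Real.tendsto_log_atTop.comp tendsto_natCast_atTop_atTop
  filter_upwards [eventually_ge_atTop 2,
    tendsto_natCast_atTop_atTop.eventually (eventually_log_rpow_le_sqrt e),
    ((tendsto_rpow_atTop he).comp hlog).eventually_ge_atTop (2 ^ (e + 1)),
    hlog.eventually (eventually_add_mul_log_div_rpow_le _ _ he')] with N hN hsqrt hlarge hdecay
  exact (scatterSum_one_le_of_log_rpow_le he hg h hN hsqrt hlarge).trans hdecay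

theorem stmt7 (a : ℕ → ℝ) (ε g : ℝ) (hε : 0 < ε) (hg : 0 < g)
    (h : ∀ n m : ℕ, 1 < n → (n : ℝ) + (n : ℝ) / (Real.log n) ^ ((1 : ℝ) + ε) < (m : ℝ) →
      g < |a n - a m|) :
    (∀ ε' : ℝ, 0 < ε' → ε' < ε →
      ∀ᶠ N : ℕ in atTop, scatterSum a 1 N ≤ ((Real.log N) ^ ((1 : ℝ) + ε'))⁻¹) ∧
    IsDeltaScattered a 1 := by
  have key : ∀ ε' : ℝ, 0 < ε' → ε' < ε →
      ∀ᶠ N : ℕ in atTop, scatterSum a 1 N ≤ ((Real.log N) ^ ((1 : ℝ) + ε'))⁻¹ :=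
    fun ε' _ hε' => eventually_scatterSum_one_le_inv_log_rpow (by linarith) hg h (by linarith)
  exact ⟨key, ε / 2, half_pos hε, key _ (half_pos hε) (half_lt_self hε)⟩
end

section
/- For every ε > 0 the sequence a(n) = (log n)^{2+ε} satisfies Weyl's growth condition: there exist ε', g > 0 such that |a(m) − a(n)| > g whenever m > n + n/(log n)^{1+ε'}. -/
open Set

/-!
Take `ε' = ε` and write `L = log n`, `M = log m`, `P = L ^ (1 + ε)`. The hypothesis says
`m > n (1 + P⁻¹)`, so `M - L > log (1 + P⁻¹) ≥ 1 / (1 + P)`. By convexity of `x ↦ x ^ (2 + ε)`,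
`M ^ (2 + ε) - L ^ (2 + ε) ≥ (2 + ε) P (M - L) > P / (1 + P)`, and `P / (1 + P)` is bounded
below by its value at `n = 2`.
-/

namespace Real

lemma mul_rpow_sub_one_mul_sub_le_rpow_sub_rpow {p x y : ℝ} (hp : 1 ≤ p) (hx : 0 ≤ x)
    (hxy : x < y) : p * x ^ (p - 1) * (y - x) ≤ y ^ p - x ^ p := by
  have hslope := (convexOn_rpow hp).le_slope_of_hasDerivAt (mem_Ici.2 hx)
    (mem_Ici.2 (hx.trans hxy.le)) hxy (hasDerivAt_rpow_const (Or.inr hp))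
  rw [slope_def_field, le_div_iff₀ (sub_pos.2 hxy)] at hslope
  exact hslope

lemma inv_one_add_inv_lt_mul_log_sub_log {x y P : ℝ} (hx : 0 < x) (hP : 0 < P)
    (h : x + x / P < y) : (1 + P⁻¹)⁻¹ < P * (log y - log x) := by
  have hq : 0 < 1 + P⁻¹ := by positivity
  have hxy : x * (1 + P⁻¹) < y := by rwa [mul_one_add, ← div_eq_mul_inv]
  have hlog : log (1 + P⁻¹) < log y - log x := by
    have := log_lt_log (by positivity) hxy
    rwa [log_mul hx.ne' hq.ne', ← lt_sub_iff_add_lt'] at this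
  have hlower : 1 - (1 + P⁻¹)⁻¹ ≤ log (1 + P⁻¹) := one_sub_inv_le_log_of_pos hq
  have hid : P * (1 - (1 + P⁻¹)⁻¹) = (1 + P⁻¹)⁻¹ := by field_simp; ring
  calc (1 + P⁻¹)⁻¹ = P * (1 - (1 + P⁻¹)⁻¹) := hid.symm
    _ < P * (log y - log x) := mul_lt_mul_of_pos_left (hlower.trans_lt hlog) hP

end Real

open Real in
theorem stmt8 (ε : ℝ) (hε : 0 < ε) :
    ∃ ε' > (0 : ℝ), ∃ g > (0 : ℝ), ∀ n m : ℕ, 1 < n →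
      (n : ℝ) + (n : ℝ) / (Real.log n) ^ ((1 : ℝ) + ε') < (m : ℝ) →
      g < |(Real.log m) ^ ((2 : ℝ) + ε) - (Real.log n) ^ ((2 : ℝ) + ε)| := by
  have hlog2 : 0 < log 2 := log_pos one_lt_two
  refine ⟨ε, hε, (1 + (log 2 ^ (1 + ε))⁻¹)⁻¹, by positivity, fun n m hn hm => ?_⟩
  have hn2 : (2 : ℝ) ≤ n := by exact_mod_cast hn
  have hL : log 2 ≤ log n := log_le_log two_pos hn2
  have hP : 0 < log n ^ (1 + ε) := rpow_pos_of_pos (hlog2.trans_le hL) _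
  have hgrowth := inv_one_add_inv_lt_mul_log_sub_log (by positivity) hP hm
  have hML : log n < log m :=
    sub_pos.1 (pos_of_mul_pos_right ((by positivity : (0 : ℝ) < _).trans hgrowth) hP.le)
  have hconvex := mul_rpow_sub_one_mul_sub_le_rpow_sub_rpow (p := 2 + ε) (by linarith)
    (hlog2.le.trans hL) hML
  rw [show (2 : ℝ) + ε - 1 = 1 + ε by ring] at hconvex
  calc (1 + (log 2 ^ (1 + ε))⁻¹)⁻¹ ≤ (1 + (log n ^ (1 + ε))⁻¹)⁻¹ := by gcongr
    _ < log n ^ (1 + ε) * (log m - log n) := hgrowth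
    _ ≤ (2 + ε) * log n ^ (1 + ε) * (log m - log n) := by
      rw [mul_assoc]; exact le_mul_of_one_le_left (by positivity) (by linarith)
    _ ≤ log m ^ (2 + ε) - log n ^ (2 + ε) := hconvex
    _ ≤ _ := le_abs_self _
end

section
/- Let f : ℝ → ℝ be a non-constant real analytic function. Then the pushforward of Lebesgue measure under f is absolutely continuous with respect to Lebesgue measure; equivalently, for every Borel set A ⊆ ℝ of Lebesgue measure zero, the preimage f^{−1}(A) has Lebesgue measure zero. -/
/-!
Where `f'` does not vanish, the inverse function theorem makes `f` injective near each point,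
and there the change of variables formula shows that `f_*(|f'| · Lebesgue)` is Lebesgue measure
on the image. Since `|f'| > 0`, Lebesgue measure is absolutely continuous with respect to
`|f'| · Lebesgue`, so the preimage of a null set is null. For non-constant analytic `f`, the
derivative `f'` is analytic and not identically zero, so its zeros are isolated, hence countable.
-/

open MeasureTheory Set

namespace MeasureTheory

variable {E : Type*} [NormedAddCommGroup E] [NormedSpace ℝ E] [FiniteDimensional ℝ E]
  [MeasurableSpace E] [BorelSpace E] (μ : Measure E) [μ.IsAddHaarMeasure]
  {f : E → E} {f' : E → E →L[ℝ] E} {s A : Set E}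

theorem addHaar_inter_preimage_eq_zero_of_injOn (hs : MeasurableSet s)
    (hf' : ∀ x ∈ s, HasFDerivWithinAt f (f' x) s x) (hf : InjOn f s)
    (hdet : ∀ x ∈ s, (f' x).det ≠ 0) (hA : μ A = 0) : μ (s ∩ f ⁻¹' A) = 0 := by
  set ν := (μ.restrict s).withDensity fun x => ENNReal.ofReal |(f' x).det|
  have hν : ν (f ⁻¹' A) = 0 := by
    refine le_antisymm ?_ zero_le
    calc ν (f ⁻¹' A) ≤ ν.map f A :=
          Measure.le_map_apply ((ContinuousOn.aemeasurable (fun x hx =>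
            (hf' x hx).continuousWithinAt) hs).mono_ac (withDensity_absolutelyContinuous _ _)) A
      _ = μ.restrict (f '' s) A := by
          rw [map_withDensity_abs_det_fderiv_eq_addHaar μ hs.nullMeasurableSet hf' hf]
      _ ≤ μ A := Measure.restrict_apply_le _ _
      _ = 0 := hA
  have hac : μ.restrict s ≪ ν :=
    withDensity_absolutelyContinuous' (aemeasurable_ofReal_abs_det_fderivWithin μ hs hf')
      ((ae_restrict_iff' hs).2 (.of_forall fun x hx => by simpa using hdet x hx))
  simpa [Measure.restrict_apply' hs, inter_comm] using hac hν

theorem addHaar_inter_preimage_eq_zero_of_hasStrictFDerivAt (hs : MeasurableSet s)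
    (hf' : ∀ x ∈ s, HasStrictFDerivAt f (f' x) x) (hdet : ∀ x ∈ s, (f' x).det ≠ 0)
    (hA : μ A = 0) : μ (s ∩ f ⁻¹' A) = 0 := by
  refine measure_null_of_locally_null _ fun x hx => ?_
  have hfx := hf' x hx.1
  rw [← (f' x).coe_toContinuousLinearEquivOfDetNeZero (hdet x hx.1)] at hfx
  obtain ⟨t, hleft, ht, hxt⟩ := mem_nhds_iff.1 hfx.eventually_left_inverse
  refine ⟨s ∩ f ⁻¹' A ∩ t, inter_mem_nhdsWithin _ (ht.mem_nhds hxt), ?_⟩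
  have hinj : InjOn f (s ∩ t) :=
    LeftInvOn.injOn (f₁' := hfx.localInverse) fun y hy => hleft hy.2
  rw [inter_right_comm]
  exact addHaar_inter_preimage_eq_zero_of_injOn μ (hs.inter ht.measurableSet)
    (fun y hy => (hf' y hy.1).hasFDerivAt.hasFDerivWithinAt) hinj (fun y hy => hdet y hy.1) hA

theorem addHaar_preimage_eq_zero_of_ae_hasStrictFDerivAt
    (hf : ∀ᵐ x ∂μ, HasStrictFDerivAt f (f' x) x ∧ (f' x).det ≠ 0) (hA : μ A = 0) :
    μ (f ⁻¹' A) = 0 := by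
  set N := toMeasurable μ {x | ¬(HasStrictFDerivAt f (f' x) x ∧ (f' x).det ≠ 0)}
  have hN : μ N = 0 := by rwa [measure_toMeasurable, ← ae_iff]
  have hgood : ∀ x ∈ Nᶜ, HasStrictFDerivAt f (f' x) x ∧ (f' x).det ≠ 0 := fun x hx =>
    not_not.1 fun h => hx (subset_toMeasurable _ _ h)
  have := addHaar_inter_preimage_eq_zero_of_hasStrictFDerivAt μ
    (measurableSet_toMeasurable _ _).compl (fun x hx => (hgood x hx).1) (fun x hx => (hgood x hx).2)
    hA
  exact measure_mono_null (fun x hx => (em (x ∈ N)).imp id fun h => ⟨h, hx⟩)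
    (measure_union_null hN this)

end MeasureTheory

theorem AnalyticOnNhd.ae_ne_zero {𝕜 F : Type*} [NontriviallyNormedField 𝕜] [ConnectedSpace 𝕜]
    [SecondCountableTopology 𝕜] [MeasurableSpace 𝕜] {μ : Measure 𝕜} [NullSingletonClass μ]
    [NormedAddCommGroup F] [NormedSpace 𝕜 F] {g : 𝕜 → F} (hg : AnalyticOnNhd 𝕜 g univ) {x : 𝕜}
    (hx : g x ≠ 0) : ∀ᵐ y ∂μ, g y ≠ 0 := by
  have h := ae_restrict_le_codiscreteWithin (μ := μ) MeasurableSet.univ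
    (hg.preimage_zero_mem_codiscrete hx)
  rwa [Measure.restrict_univ] at h

theorem stmt14 (f : ℝ → ℝ) (hf : ∀ x : ℝ, AnalyticAt ℝ f x)
    (hnc : ∃ x y : ℝ, f x ≠ f y) :
    ∀ A : Set ℝ, MeasurableSet A → volume A = 0 → volume (f ⁻¹' A) = 0 := by
  intro A _ hA
  obtain ⟨x, y, hxy⟩ := hnc
  obtain ⟨z, hz⟩ : ∃ z, deriv f z ≠ 0 := by
    by_contra! h
    exact hxy (is_const_of_deriv_eq_zero (fun x => (hf x).differentiableAt) h x y)
  have hderiv : ∀ᵐ x, deriv f x ≠ 0 :=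
    AnalyticOnNhd.ae_ne_zero (AnalyticOnNhd.deriv fun x _ => hf x) hz
  refine addHaar_preimage_eq_zero_of_ae_hasStrictFDerivAt volume (f' := fderiv ℝ f)
    (hderiv.mono fun x hx => ⟨(hf x).hasStrictFDerivAt, ?_⟩) hA
  rwa [← toSpanSingleton_deriv, ContinuousLinearMap.det_toSpanSingleton]
end
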